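/- arXiv:1505.01267 — 2 statements merged into one kernel-verified Lean document; each statement's English description precedes it below -/
import Mathlib

section
/- Let N > 0 be a real parameter and let f₄(y) = 1 + y⁴/(4N(N+2)) + y⁸/(192N(N+2)(N+4)(N+6)). Then for every y > 0, f₄ satisfies the linear focusing self-similar equation with eigenvalue α₄ = 2: namely, -L_N f₄(y) - (1/4)·y·f₄'(y) + 2·f₄(y) = 0. -/
lemma deriv_congr_pos' {F G : ℝ → ℝ} {x : ℝ} (hx : 0 < x)
    (h : ∀ v ∈ Set.Ioi (0:ℝ), F v = G v) : deriv F x = deriv G x :=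
  Filter.EventuallyEq.deriv_eq (Filter.eventually_of_mem (Ioi_mem_nhds hx) h)

lemma deriv_two_rpow' (b c p q : ℝ) {x : ℝ} (hx : 0 < x) :
    deriv (fun v : ℝ => b * v ^ p + c * v ^ q) x
      = b * (p * x ^ (p-1)) + c * (q * x ^ (q-1)) := by
  have h1 := (Real.hasDerivAt_rpow_const (x := x) (p := p) (Or.inl hx.ne')).const_mul b
  have h2 := (Real.hasDerivAt_rpow_const (x := x) (p := q) (Or.inl hx.ne')).const_mul c
  exact (h1.add h2).deriv

/-- The radial fourth-order operator
`L_N f (y) = y^{1-N} (y^{N-1} (y^{1-N} (y^{N-1} f')')')'`. -/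
noncomputable def radialBiLap (N : ℝ) (f : ℝ → ℝ) (y : ℝ) : ℝ :=
  y ^ (1 - N) *
    deriv (fun z : ℝ => z ^ (N - 1) *
      deriv (fun w : ℝ => w ^ (1 - N) *
        deriv (fun v : ℝ => v ^ (N - 1) * deriv f v) w) z) y

/-- `f₄(y) = 1 + y⁴/(4N(N+2)) + y⁸/(192N(N+2)(N+4)(N+6))` solves the linear
focusing self-similar equation with eigenvalue `α₄ = 2`. -/
theorem stmt_6 (N : ℝ) (hN : 0 < N) :
    ∀ y : ℝ, 0 < y →
      -radialBiLap N (fun y : ℝ => 1 + y ^ 4 / (4 * N * (N + 2))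
          + y ^ 8 / (192 * N * (N + 2) * (N + 4) * (N + 6))) y
        - (1/4) * y * deriv (fun y : ℝ => 1 + y ^ 4 / (4 * N * (N + 2))
          + y ^ 8 / (192 * N * (N + 2) * (N + 4) * (N + 6))) y
        + 2 * (1 + y ^ 4 / (4 * N * (N + 2))
          + y ^ 8 / (192 * N * (N + 2) * (N + 4) * (N + 6))) = 0 := by
  intro y hy
  set D1 : ℝ := 4 * N * (N + 2) with hD1def
  set D2 : ℝ := 192 * N * (N + 2) * (N + 4) * (N + 6) with hD2def
  have hD1 : D1 ≠ 0 := by positivity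
  have hD2 : D2 ≠ 0 := by positivity
  set f : ℝ → ℝ := fun v : ℝ => 1 + v ^ 4 / D1 + v ^ 8 / D2 with hfdef
  -- derivative of f
  have hdf : ∀ v : ℝ, deriv f v = 4 * v ^ 3 / D1 + 8 * v ^ 7 / D2 := by
    intro v
    have h1 : HasDerivAt (fun v : ℝ => v ^ 4) (4 * v ^ 3) v := by
      simpa using hasDerivAt_pow 4 v
    have h2 : HasDerivAt (fun v : ℝ => v ^ 8) (8 * v ^ 7) v := by
      simpa using hasDerivAt_pow 8 v
    have : HasDerivAt f (4 * v ^ 3 / D1 + 8 * v ^ 7 / D2) v := by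
      have h := ((hasDerivAt_const v (1:ℝ)).add (h1.div_const D1)).add (h2.div_const D2)
      rw [zero_add] at h
      exact h
    exact this.deriv
  -- split lemmas
  have hsplitn : ∀ (v : ℝ), 0 < v → ∀ (a : ℝ) (n : ℕ) (b : ℝ), a + n = b →
      v ^ b = v ^ a * v ^ n := by
    intro v hv a n b hb
    rw [← hb, Real.rpow_add hv, Real.rpow_natCast]
  have hsplit : ∀ (v : ℝ), 0 < v → ∀ (a b c : ℝ), a + b = c →
      v ^ c = v ^ a * v ^ b := by
    intro v hv a b c hc
    rw [← hc, Real.rpow_add hv]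
  -- stage A
  have hA : ∀ w ∈ Set.Ioi (0:ℝ),
      (fun v : ℝ => v ^ (N - 1) * deriv f v) w
        = (4 / D1) * w ^ (N + 2) + (8 / D2) * w ^ (N + 6) := by
    intro w hw
    simp only
    rw [hdf w, hsplitn w hw (N-1) 3 (N+2) (by push_cast; ring),
      hsplitn w hw (N-1) 7 (N+6) (by push_cast; ring)]
    ring
  have hdA : ∀ w ∈ Set.Ioi (0:ℝ),
      deriv (fun v : ℝ => v ^ (N - 1) * deriv f v) w
        = (4 / D1) * ((N+2) * w ^ (N + 1)) + (8 / D2) * ((N+6) * w ^ (N + 5)) := by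
    intro w hw
    rw [deriv_congr_pos' hw hA, deriv_two_rpow' _ _ _ _ hw,
      show N + 2 - 1 = N + 1 by ring, show N + 6 - 1 = N + 5 by ring]
  -- stage B
  have hB : ∀ z ∈ Set.Ioi (0:ℝ),
      (fun w : ℝ => w ^ (1 - N) * deriv (fun v : ℝ => v ^ (N - 1) * deriv f v) w) z
        = (4 * (N+2) / D1) * z ^ (2:ℝ) + (8 * (N+6) / D2) * z ^ (6:ℝ) := by
    intro z hz
    simp only
    rw [hdA z hz, hsplit z hz (1-N) (N+1) 2 (by ring),
      hsplit z hz (1-N) (N+5) 6 (by ring)]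
    ring
  have hdB : ∀ z ∈ Set.Ioi (0:ℝ),
      deriv (fun w : ℝ => w ^ (1 - N) *
          deriv (fun v : ℝ => v ^ (N - 1) * deriv f v) w) z
        = (4 * (N+2) / D1) * (2 * z ^ (1:ℝ)) + (8 * (N+6) / D2) * (6 * z ^ (5:ℝ)) := by
    intro z hz
    rw [deriv_congr_pos' hz hB, deriv_two_rpow' _ _ _ _ hz]
    norm_num
  -- stage C
  have hC : ∀ x ∈ Set.Ioi (0:ℝ),
      (fun z : ℝ => z ^ (N - 1) * deriv (fun w : ℝ => w ^ (1 - N) *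
          deriv (fun v : ℝ => v ^ (N - 1) * deriv f v) w) z) x
        = (8 * (N+2) / D1) * x ^ N + (48 * (N+6) / D2) * x ^ (N + 4) := by
    intro x hx
    simp only
    rw [hdB x hx, hsplit x hx (N-1) 1 N (by ring),
      hsplit x hx (N-1) 5 (N+4) (by ring)]
    ring
  have hdC : deriv (fun z : ℝ => z ^ (N - 1) * deriv (fun w : ℝ => w ^ (1 - N) *
          deriv (fun v : ℝ => v ^ (N - 1) * deriv f v) w) z) y
        = (8 * (N+2) / D1) * (N * y ^ (N - 1)) + (48 * (N+6) / D2) * ((N+4) * y ^ (N + 3)) := by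
    rw [deriv_congr_pos' hy hC, deriv_two_rpow' _ _ _ _ hy,
      show N + 4 - 1 = N + 3 by ring]
  -- the operator value
  have hL : radialBiLap N f y = 8 * N * (N+2) / D1 + 48 * (N+4) * (N+6) / D2 * y ^ (4:ℕ) := by
    rw [radialBiLap, hdC]
    have e1 : y ^ (1-N) * y ^ (N-1) = 1 := by
      rw [← Real.rpow_add hy]; norm_num
    have e2 : y ^ (1-N) * y ^ (N+3) = y ^ (4:ℕ) := by
      rw [← Real.rpow_add hy, show 1 - N + (N+3) = ((4:ℕ):ℝ) by push_cast; ring,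
        Real.rpow_natCast]
    calc y ^ (1-N) * ((8 * (N+2) / D1) * (N * y ^ (N - 1)) + (48 * (N+6) / D2) * ((N+4) * y ^ (N + 3)))
        = 8 * N * (N+2) / D1 * (y ^ (1-N) * y ^ (N-1))
          + 48 * (N+4) * (N+6) / D2 * (y ^ (1-N) * y ^ (N+3)) := by ring
      _ = _ := by rw [e1, e2]; ring
  rw [hL, hdf y]
  field_simp
  ring
end

section
/- Let N ≥ 1 be an integer and let u : ℝ^N × ℝ → ℝ be defined by u(x,t) = t² - t·‖x‖⁴/(4N(N+2)) + ‖x‖⁸/(192N(N+2)(N+4)(N+6)), where ‖·‖ is the Euclidean norm. Then u solves the bi-harmonic heat equation: for all x ∈ ℝ^N and t ∈ ℝ, ∂_t u(x,t) = -Δ(Δ u(·,t))(x), where Δ denotes the Laplacian (sum of the pure second partial derivatives with respect to an orthonormal basis). -/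
/-- The Laplacian as the sum of pure second partial derivatives with respect
to the standard orthonormal basis of `ℝ^N`. -/
noncomputable def euclLap {N : ℕ} (f : EuclideanSpace ℝ (Fin N) → ℝ)
    (x : EuclideanSpace ℝ (Fin N)) : ℝ :=
  ∑ i : Fin N,
    iteratedDeriv 2 (fun s : ℝ => f (x + s • EuclideanSpace.single i (1:ℝ))) 0

theorem iter2_poly8 (c0 c1 c2 c3 c4 c5 c6 c7 c8 : ℝ) :
    iteratedDeriv 2 (fun s : ℝ => c0 + c1*s + c2*s^2 + c3*s^3 + c4*s^4 + c5*s^5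
      + c6*s^6 + c7*s^7 + c8*s^8) 0 = 2*c2 := by
  have H : ∀ s : ℝ, HasDerivAt (fun s : ℝ => c0 + c1*s + c2*s^2 + c3*s^3 + c4*s^4 + c5*s^5
      + c6*s^6 + c7*s^7 + c8*s^8)
      (c1 + 2*c2*s + 3*c3*s^2 + 4*c4*s^3 + 5*c5*s^4 + 6*c6*s^5 + 7*c7*s^6 + 8*c8*s^7) s := by
    intro s
    have h := (((((((((hasDerivAt_const s c0).add ((hasDerivAt_id s).const_mul c1)).add
      ((hasDerivAt_pow 2 s).const_mul c2)).add ((hasDerivAt_pow 3 s).const_mul c3)).add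
      ((hasDerivAt_pow 4 s).const_mul c4)).add ((hasDerivAt_pow 5 s).const_mul c5)).add
      ((hasDerivAt_pow 6 s).const_mul c6)).add ((hasDerivAt_pow 7 s).const_mul c7)).add
      ((hasDerivAt_pow 8 s).const_mul c8))
    exact h.congr_deriv (by push_cast; ring)
  have hd : deriv (fun s : ℝ => c0 + c1*s + c2*s^2 + c3*s^3 + c4*s^4 + c5*s^5
      + c6*s^6 + c7*s^7 + c8*s^8)
      = fun s : ℝ => c1 + 2*c2*s + 3*c3*s^2 + 4*c4*s^3 + 5*c5*s^4 + 6*c6*s^5 + 7*c7*s^6 + 8*c8*s^7 :=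
    funext fun s => (H s).deriv
  have H2 : HasDerivAt (fun s : ℝ => c1 + 2*c2*s + 3*c3*s^2 + 4*c4*s^3 + 5*c5*s^4 + 6*c6*s^5
      + 7*c7*s^6 + 8*c8*s^7) (2*c2) 0 := by
    have h := ((((((((hasDerivAt_const (0:ℝ) c1).add ((hasDerivAt_id (0:ℝ)).const_mul (2*c2))).add
      ((hasDerivAt_pow 2 0).const_mul (3*c3))).add ((hasDerivAt_pow 3 0).const_mul (4*c4))).add
      ((hasDerivAt_pow 4 0).const_mul (5*c5))).add ((hasDerivAt_pow 5 0).const_mul (6*c6))).add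
      ((hasDerivAt_pow 6 0).const_mul (7*c7))).add ((hasDerivAt_pow 7 0).const_mul (8*c8)))
    exact h.congr_deriv (by norm_num)
  rw [show (2:ℕ) = 1+1 from rfl, iteratedDeriv_succ, iteratedDeriv_one, hd]
  exact H2.deriv

theorem normsq_line {N : ℕ} (x : EuclideanSpace ℝ (Fin N)) (i : Fin N) (s : ℝ) :
    ‖x + s • EuclideanSpace.single i (1:ℝ)‖^2 = ‖x‖^2 + 2*(x i)*s + s^2 := by
  rw [norm_add_sq_real, real_inner_smul_right, EuclideanSpace.inner_single_right,
    norm_smul, EuclideanSpace.norm_single]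
  simp [mul_pow, sq_abs]
  ring

theorem sum_coord_sq {N : ℕ} (y : EuclideanSpace ℝ (Fin N)) :
    ∑ i : Fin N, (y i)^2 = ‖y‖^2 := by
  rw [EuclideanSpace.norm_eq, Real.sq_sqrt (by positivity)]
  simp [sq_abs]

/-- `u(x,t) = t² - t·‖x‖⁴/(4N(N+2)) + ‖x‖⁸/(192N(N+2)(N+4)(N+6))` solves the bi-harmonic heat equation
`u_t = -Δ²u` in `ℝ^N`. -/
theorem stmt_18 (N : ℕ) (hN : 1 ≤ N)
    (u : EuclideanSpace ℝ (Fin N) → ℝ → ℝ)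
    (hu : ∀ (x : EuclideanSpace ℝ (Fin N)) (t : ℝ),
        u x t = t ^ 2 - t * ‖x‖ ^ 4 / (4 * (N : ℝ) * ((N : ℝ) + 2))
          + ‖x‖ ^ 8 / (192 * (N : ℝ) * ((N : ℝ) + 2) * ((N : ℝ) + 4) * ((N : ℝ) + 6))) :
    ∀ (x : EuclideanSpace ℝ (Fin N)) (t : ℝ),
      deriv (fun τ : ℝ => u x τ) t =
        -euclLap (fun y : EuclideanSpace ℝ (Fin N) =>
          euclLap (fun z : EuclideanSpace ℝ (Fin N) => u z t) y) x := by
  intro x t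
  have hN0 : (N:ℝ) ≠ 0 := by positivity
  have hN2 : (N:ℝ) + 2 ≠ 0 := by positivity
  have hN4 : (N:ℝ) + 4 ≠ 0 := by positivity
  have hN6 : (N:ℝ) + 6 ≠ 0 := by positivity
  set d1 : ℝ := 4 * (N:ℝ) * ((N:ℝ) + 2) with hd1
  set d2 : ℝ := 192 * (N:ℝ) * ((N:ℝ) + 2) * ((N:ℝ) + 4) * ((N:ℝ) + 6) with hd2
  set d3 : ℝ := 24 * (N:ℝ) * ((N:ℝ) + 2) * ((N:ℝ) + 4) with hd3
  -- Step 1: first Laplacian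
  have hΔ : ∀ y : EuclideanSpace ℝ (Fin N),
      euclLap (fun z : EuclideanSpace ℝ (Fin N) => u z t) y
        = -t * ‖y‖^2 / (N:ℝ) + ‖y‖^6 / d3 := by
    intro y
    set A : ℝ := ‖y‖^2 with hA
    unfold euclLap
    have hterm : ∀ i : Fin N,
        iteratedDeriv 2 (fun s : ℝ => u (y + s • EuclideanSpace.single i (1:ℝ)) t) 0
          = (2*(-t*2*A/d1 + 4*A^3/d2)) + (2*(-4*t/d1 + 24*A^2/d2)) * (y i)^2 := by
      intro i
      set b : ℝ := y i with hb
      have hfun : (fun s : ℝ => u (y + s • EuclideanSpace.single i (1:ℝ)) t)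
          = (fun s : ℝ => (t^2 - t*A^2/d1 + A^4/d2)
            + (-t*4*A*b/d1 + 8*A^3*b/d2)*s
            + (-t*(4*b^2+2*A)/d1 + (24*A^2*b^2+4*A^3)/d2)*s^2
            + (-t*4*b/d1 + (32*A*b^3+24*A^2*b)/d2)*s^3
            + (-t/d1 + (16*b^4+48*A*b^2+6*A^2)/d2)*s^4
            + ((32*b^3+24*A*b)/d2)*s^5
            + ((24*b^2+4*A)/d2)*s^6
            + (8*b/d2)*s^7
            + (1/d2)*s^8) := by
        funext s
        rw [hu]
        have h2 := normsq_line y i s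
        have h4 : ‖y + s • EuclideanSpace.single i (1:ℝ)‖^4 = (A + 2*b*s + s^2)^2 := by
          rw [show (4:ℕ) = 2*2 from rfl, pow_mul, h2]
        have h8 : ‖y + s • EuclideanSpace.single i (1:ℝ)‖^8 = (A + 2*b*s + s^2)^4 := by
          rw [show (8:ℕ) = 2*4 from rfl, pow_mul, h2]
        rw [h4, h8]
        ring
      rw [hfun, iter2_poly8]
      ring
    rw [Finset.sum_congr rfl (fun i _ => hterm i)]
    rw [Finset.sum_add_distrib, Finset.sum_const, ← Finset.mul_sum, sum_coord_sq y]
    simp only [Finset.card_univ, Fintype.card_fin, nsmul_eq_mul, ← hA]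
    rw [hd1, hd2, hd3]
    field_simp
    ring
  -- Step 2: second Laplacian
  have hΔfun : (fun y : EuclideanSpace ℝ (Fin N) =>
      euclLap (fun z : EuclideanSpace ℝ (Fin N) => u z t) y)
      = (fun y : EuclideanSpace ℝ (Fin N) => -t * ‖y‖^2 / (N:ℝ) + ‖y‖^6 / d3) :=
    funext hΔ
  have hΔ2 : euclLap (fun y : EuclideanSpace ℝ (Fin N) =>
      euclLap (fun z : EuclideanSpace ℝ (Fin N) => u z t) y) x
      = -2*t + ‖x‖^4 / d1 := by
    rw [hΔfun]
    set A : ℝ := ‖x‖^2 with hA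
    unfold euclLap
    have hterm : ∀ i : Fin N,
        iteratedDeriv 2 (fun s : ℝ => -t * ‖x + s • EuclideanSpace.single i (1:ℝ)‖^2 / (N:ℝ)
          + ‖x + s • EuclideanSpace.single i (1:ℝ)‖^6 / d3) 0
          = (2*(-t/(N:ℝ) + 3*A^2/d3)) + (2*(12*A/d3)) * (x i)^2 := by
      intro i
      set b : ℝ := x i with hb
      have hfun : (fun s : ℝ => -t * ‖x + s • EuclideanSpace.single i (1:ℝ)‖^2 / (N:ℝ)
            + ‖x + s • EuclideanSpace.single i (1:ℝ)‖^6 / d3)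
          = (fun s : ℝ => (-t*A/(N:ℝ) + A^3/d3)
            + (-t*2*b/(N:ℝ) + 6*A^2*b/d3)*s
            + (-t/(N:ℝ) + (12*A*b^2+3*A^2)/d3)*s^2
            + ((8*b^3+12*A*b)/d3)*s^3
            + ((12*b^2+3*A)/d3)*s^4
            + (6*b/d3)*s^5
            + (1/d3)*s^6
            + (0:ℝ)*s^7
            + (0:ℝ)*s^8) := by
        funext s
        have h2 := normsq_line x i s
        have h6 : ‖x + s • EuclideanSpace.single i (1:ℝ)‖^6 = (A + 2*b*s + s^2)^3 := by
          rw [show (6:ℕ) = 2*3 from rfl, pow_mul, h2]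
        rw [h6, h2]
        ring
      rw [hfun, iter2_poly8]
      ring
    rw [Finset.sum_congr rfl (fun i _ => hterm i)]
    rw [Finset.sum_add_distrib, Finset.sum_const, ← Finset.mul_sum, sum_coord_sq x]
    simp only [Finset.card_univ, Fintype.card_fin, nsmul_eq_mul, ← hA]
    rw [hd1, hd3]
    field_simp
    ring
  -- Step 3: time derivative
  have hL : deriv (fun τ : ℝ => u x τ) t = 2*t - ‖x‖^4 / d1 := by
    have hfun : (fun τ : ℝ => u x τ)
        = (fun τ : ℝ => (‖x‖^8/d2) + (-(‖x‖^4/d1))*τ + τ^2) := by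
      funext τ
      rw [hu]
      ring
    rw [hfun]
    have H : HasDerivAt (fun τ : ℝ => (‖x‖^8/d2) + (-(‖x‖^4/d1))*τ + τ^2)
        (2*t - ‖x‖^4/d1) t := by
      have h := ((hasDerivAt_const t (‖x‖^8/d2)).add
        ((hasDerivAt_id t).const_mul (-(‖x‖^4/d1)))).add (hasDerivAt_pow 2 t)
      exact h.congr_deriv (by push_cast; ring)
    exact H.deriv
  rw [hL, hΔ2]
  ring
end
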